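/- Let g, h ≥ 1 with g + h = j, and let 0 ≤ γ ≤ γ_1 ≤ γ_2 ≤ 1 - η with r = (g-1)(1-γ_2) + (h-1)(1-γ_1) + 1 - γ fixed, as well as γ_2 fixed. Then χ(A_{γ_2}^{(g)} ⊞_γ A_{γ_1}^{(h)}), viewed as a function of γ under the constraint (h-1)γ_1 + γ = const, is minimized at γ = γ_1 (i.e., it is monotone decreasing in γ on the allowed range). -/

import Mathlib

/-- `χ(B)`: the sum of all the entries of `B⁻¹`. -/
noncomputable def chi {ι : Type*} [Fintype ι] [DecidableEq ι] (B : Matrix ι ι ℝ) : ℝ :=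
  ∑ i, ∑ l, B⁻¹ i l

/-- The equidistant matrix `A_r^{(j)}`. -/
def eqMat (j : ℕ) (r : ℝ) : Matrix (Fin j) (Fin j) ℝ :=
  Matrix.of fun i l => if i = l then 1 else r

/-- The block sum `A₁ ⊞_s A₂`. -/
def blockSum {g h : ℕ} (A₁ : Matrix (Fin g) (Fin g) ℝ) (A₂ : Matrix (Fin h) (Fin h) ℝ)
    (s : ℝ) : Matrix (Fin g ⊕ Fin h) (Fin g ⊕ Fin h) ℝ :=
  Matrix.fromBlocks A₁ (Matrix.of fun _ _ => s) (Matrix.of fun _ _ => s) A₂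

/-!
Since `χ(M) = 𝟙ᵀ M⁻¹ 𝟙`, it is the coordinate sum of the solution of `M v = 𝟙`. For
`A_a^{(g)} ⊞_s A_b^{(h)}` this solution is constant on each block, and the two block values solve
the 2×2 system `[[P, g s], [h s, Q]]` with `P = 1 + (g-1)a`, `Q = 1 + (h-1)b` (the row sums of the
diagonal blocks); the same system shows that the matrix is invertible. This gives
`χ = (g Q + h P - 2 g h s) / (P Q - g h s²)`. Fixing `(h-1)γ₁ + γ = h t` and comparing the values
at `(b, s) = (γ₁, γ)` and `(t, t)`, the cross-multiplied difference factors into terms that are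
nonnegative because `γ ≤ t ≤ γ₂ < 1`.
-/

open Matrix

lemma chi_eq_sum_of_mulVec_eq_one {ι : Type*} [Fintype ι] [DecidableEq ι] {M : Matrix ι ι ℝ}
    (hM : IsUnit M) {v : ι → ℝ} (hv : M *ᵥ v = 1) : chi M = ∑ i, v i := by
  have hv' : M⁻¹ *ᵥ 1 = v := by
    rw [← hv, mulVec_mulVec, nonsing_inv_mul _ ((isUnit_iff_isUnit_det M).1 hM), one_mulVec]
  simp only [chi, ← hv', mulVec, dotProduct, Pi.one_apply, mul_one]

lemma eqMat_eq_smul_one_add (n : ℕ) (r : ℝ) :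
    eqMat n r = (1 - r) • (1 : Matrix (Fin n) (Fin n) ℝ) + of fun _ _ => r := by
  ext i k
  by_cases hik : i = k <;> simp [eqMat, one_apply, hik]

lemma eqMat_mulVec (n : ℕ) (r : ℝ) (x : Fin n → ℝ) :
    eqMat n r *ᵥ x = fun i => (1 - r) * x i + r * ∑ k, x k := by
  rw [eqMat_eq_smul_one_add, add_mulVec, smul_mulVec, one_mulVec]
  ext i
  simp [mulVec, dotProduct, Finset.mul_sum]

lemma sum_eqMat_mulVec (n : ℕ) (r : ℝ) (x : Fin n → ℝ) :
    ∑ i, (eqMat n r *ᵥ x) i = (1 + (n - 1) * r) * ∑ k, x k := by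
  simp only [eqMat_mulVec, Finset.sum_add_distrib, ← Finset.mul_sum, Finset.sum_const,
    Finset.card_univ, Fintype.card_fin, nsmul_eq_mul]
  ring

lemma blockSum_mulVec_elim {g h : ℕ} (A : Matrix (Fin g) (Fin g) ℝ)
    (B : Matrix (Fin h) (Fin h) ℝ) (s : ℝ) (x : Fin g → ℝ) (y : Fin h → ℝ) :
    blockSum A B s *ᵥ Sum.elim x y =
      Sum.elim (A *ᵥ x + fun _ => s * ∑ k, y k) (B *ᵥ y + fun _ => s * ∑ k, x k) := by
  ext (i | i) <;> simp [blockSum, mulVec, dotProduct, Finset.mul_sum, add_comm]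

noncomputable def chiClosedForm (g h : ℕ) (a b s : ℝ) : ℝ :=
  (g * (1 + (h - 1) * b) + h * (1 + (g - 1) * a) - 2 * g * h * s) /
    ((1 + (g - 1) * a) * (1 + (h - 1) * b) - g * h * s ^ 2)

section

variable {g h : ℕ} {a b s : ℝ}

lemma blockSum_eqMat_mulVec_injective (ha : a ≠ 1) (hb : b ≠ 1)
    (hD : (1 + (g - 1) * a) * (1 + (h - 1) * b) - g * h * s ^ 2 ≠ 0) :
    Function.Injective (blockSum (eqMat g a) (eqMat h b) s).mulVec := by
  rw [← coe_mulVecLin, injective_iff_map_eq_zero]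
  intro v hv
  rw [coe_mulVecLin, ← Sum.elim_comp_inl_inr v, blockSum_mulVec_elim] at hv
  set x := v ∘ Sum.inl
  set y := v ∘ Sum.inr
  have hx i : (eqMat g a *ᵥ x) i + s * ∑ k, y k = 0 := congrFun hv (Sum.inl i)
  have hy j : (eqMat h b *ᵥ y) j + s * ∑ k, x k = 0 := congrFun hv (Sum.inr j)
  have hX := Finset.sum_eq_zero (s := Finset.univ) fun i _ => hx i
  have hY := Finset.sum_eq_zero (s := Finset.univ) fun j _ => hy j
  simp only [Finset.sum_add_distrib, sum_eqMat_mulVec, Finset.sum_const, Finset.card_univ,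
    Fintype.card_fin, nsmul_eq_mul] at hX hY
  have hXY : ∑ k, x k = 0 ∧ ∑ k, y k = 0 := by
    constructor <;> refine (mul_eq_zero.1 ?_).resolve_left hD
    · linear_combination (1 + (h - 1) * b) * hX - g * s * hY
    · linear_combination (1 + (g - 1) * a) * hY - h * s * hX
  simp only [eqMat_mulVec, hXY.1, hXY.2, mul_zero, add_zero] at hx hy
  ext (i | j)
  · exact (mul_eq_zero.1 (hx i)).resolve_left (sub_ne_zero.2 ha.symm)
  · exact (mul_eq_zero.1 (hy j)).resolve_left (sub_ne_zero.2 hb.symm)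

lemma chiClosedForm_denom_pos (hs : 0 ≤ s) (hsa : s ≤ a) (ha : a < 1) (hsb : s ≤ b)
    (hb : b < 1) : 0 < (1 + (g - 1) * a) * (1 + (h - 1) * b) - g * h * s ^ 2 := by
  have hg : (g : ℝ) * s < 1 + (g - 1) * a := by nlinarith [g.cast_nonneg (α := ℝ)]
  have hh : (h : ℝ) * s < 1 + (h - 1) * b := by nlinarith [h.cast_nonneg (α := ℝ)]
  nlinarith [mul_lt_mul'' hg hh (by positivity) (by positivity)]

lemma chi_blockSum_eqMat (hs : 0 ≤ s) (hsa : s ≤ a) (ha : a < 1) (hsb : s ≤ b) (hb : b < 1) :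
    chi (blockSum (eqMat g a) (eqMat h b) s) = chiClosedForm g h a b s := by
  have hD := chiClosedForm_denom_pos (g := g) (h := h) hs hsa ha hsb hb
  have hM := mulVec_injective_iff_isUnit.1 (blockSum_eqMat_mulVec_injective ha.ne hb.ne hD.ne')
  unfold chiClosedForm
  set P : ℝ := 1 + (g - 1) * a
  set Q : ℝ := 1 + (h - 1) * b
  set D := P * Q - g * h * s ^ 2
  rw [chi_eq_sum_of_mulVec_eq_one hM
    (v := Sum.elim (fun _ => (Q - h * s) / D) (fun _ => (P - g * s) / D))]
  · simp only [Fintype.sum_sum_type, Sum.elim_inl, Sum.elim_inr, Finset.sum_const,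
      Finset.card_univ, Fintype.card_fin, nsmul_eq_mul]
    field_simp
    ring
  · rw [blockSum_mulVec_elim, eqMat_mulVec, eqMat_mulVec]
    ext (i | j) <;>
      simp only [Sum.elim_inl, Sum.elim_inr, Pi.add_apply, Pi.one_apply, Finset.sum_const,
        Finset.card_univ, Fintype.card_fin, nsmul_eq_mul] <;>
      field_simp <;> ring

end

lemma sub_one_mul_le_mul_sub {g u c : ℝ} (hg : 0 ≤ g) (huc : u ≤ c) (hc : c ≤ 1) :
    (g - 1) * (1 - c) ≤ g * (1 - u) :=
  mul_le_mul (by linarith) (by linarith) (by linarith) hg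

lemma chiClosedForm_le_of_equalize {g h : ℕ} {b c s t : ℝ} (hg : 1 ≤ g) (hs : 0 ≤ s)
    (hst : s ≤ t) (htc : t ≤ c) (hc : c < 1) (hsb : s ≤ b) (hb : b < 1)
    (hbt : (h - 1) * b + s = h * t) :
    chiClosedForm g h c t t ≤ chiClosedForm g h c b s := by
  have hDt := chiClosedForm_denom_pos (g := g) (h := h) (hs.trans hst) htc hc le_rfl
    (htc.trans_lt hc)
  have hDs := chiClosedForm_denom_pos (g := g) (h := h) hs (hst.trans htc) hc hsb hb
  unfold chiClosedForm
  rw [div_le_div_iff₀ hDt hDs]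
  have hQ : 1 + ((h : ℝ) - 1) * b = 1 + h * t - s := by linarith
  rw [hQ]
  have hsq : ((g - 1) * (1 - c)) ^ 2 ≤ (g * (1 - s)) * (g * (1 - t)) := by
    rw [sq]
    exact mul_le_mul (sub_one_mul_le_mul_sub g.cast_nonneg (hst.trans htc) hc.le)
      (sub_one_mul_le_mul_sub g.cast_nonneg htc hc.le)
      (mul_nonneg (sub_nonneg.2 (by exact_mod_cast hg)) (by linarith))
      (mul_nonneg g.cast_nonneg (by linarith))
  have hpt : 0 ≤ 1 + ((g : ℝ) - 1) * c - g * t := by nlinarith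
  -- Cross-multiplied, the difference of the two sides is exactly this product:
  -- `h (t - s) [g²(1 - s)(1 - t) - ((g - 1)(1 - c))² + g h (t - s)(1 + (g - 1)c - g t)]`.
  have hdiff := mul_nonneg (mul_nonneg h.cast_nonneg (sub_nonneg.2 hst))
    (add_nonneg (sub_nonneg.2 hsq)
      (mul_nonneg (mul_nonneg (mul_nonneg g.cast_nonneg h.cast_nonneg) (sub_nonneg.2 hst)) hpt))
  linarith

theorem chi_blockSum_eqMat_min {η : ℝ} (hη : 0 < η) (g h : ℕ) (hg : 1 ≤ g) (hh : 1 ≤ h)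
    (γ γ₁ γ₂ : ℝ) (h0 : 0 ≤ γ) (h1 : γ ≤ γ₁) (h2 : γ₁ ≤ γ₂) (h3 : γ₂ ≤ 1 - η) :
    chi (blockSum (eqMat g γ₂) (eqMat h ((((h : ℝ) - 1) * γ₁ + γ) / h))
        ((((h : ℝ) - 1) * γ₁ + γ) / h)) ≤
      chi (blockSum (eqMat g γ₂) (eqMat h γ₁) γ) := by
  have hγ₂ : γ₂ < 1 := by linarith
  have hh' : (1 : ℝ) ≤ h := by exact_mod_cast hh
  set t := (((h : ℝ) - 1) * γ₁ + γ) / h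
  have hbt : ((h : ℝ) - 1) * γ₁ + γ = h * t := (mul_div_cancel₀ _ (by positivity)).symm
  have hγt : γ ≤ t := by nlinarith
  have htγ₁ : t ≤ γ₁ := by nlinarith
  rw [chi_blockSum_eqMat (h0.trans hγt) (htγ₁.trans h2) hγ₂ le_rfl (by linarith),
    chi_blockSum_eqMat h0 (h1.trans h2) hγ₂ h1 (by linarith)]
  exact chiClosedForm_le_of_equalize hg h0 hγt (htγ₁.trans h2) hγ₂ h1 (by linarith) hbt
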